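/- Let (M,D) be a Dirac manifold. Then the space C^∞_adm(M,D) of admissible functions, equipped with the bracket {f,g}' := X_g f, is a Poisson algebra: the bracket is bilinear, skew-symmetric, satisfies the Leibniz rule {fg,h}' = f{g,h}' + g{f,h}' whenever all functions involved are admissible, and satisfies the Jacobi identity {{f,g}',h}' + {{g,h}',f}' + {{h,f}',g}' = 0. -/

import Mathlib

noncomputable section

open Function

/-- In the flat model a manifold is (an open piece of) a finite dimensional real
vector space `E`; covectors are continuous linear functionals. -/
abbrev CovE (E : Type) [NormedAddCommGroup E] [NormedSpace ℝ E] : Type := E →L[ℝ] ℝ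

/-- The fiber of `TM ⊕ T*M` in the flat model. -/
abbrev WE (E : Type) [NormedAddCommGroup E] [NormedSpace ℝ E] : Type := E × CovE E

section Core

variable {E F : Type} [NormedAddCommGroup E] [NormedSpace ℝ E]
  [NormedAddCommGroup F] [NormedSpace ℝ F]

/-- smooth (`C^∞`) maps -/
def SmoothF (f : E → F) : Prop := ContDiff ℝ (⊤ : ℕ∞) f

/-- the symmetric pairing `⟨(X,ξ),(Y,η)⟩₊ = (ξ(Y)+η(X))/2` -/
def pairPlus (v w : WE E) : ℝ := (v.2 w.1 + w.2 v.1) / 2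

/-- the skew-symmetric pairing `⟨(X,ξ),(Y,η)⟩₋ = (ξ(Y)−η(X))/2` -/
def pairMinus (v w : WE E) : ℝ := (v.2 w.1 - w.2 v.1) / 2

/-- derivative of a (possibly vector valued) function along a vector field -/
def vfApp (X : E → E) (f : E → F) : E → F := fun p => fderiv ℝ f p (X p)

/-- Lie bracket of vector fields -/
def vfBracket (X Y : E → E) : E → E := fun p => fderiv ℝ Y p (X p) - fderiv ℝ X p (Y p)

/-- Lie derivative `𝓛_X η` of a 1-form along a vector field -/
def lieD (X : E → E) (η : E → CovE E) : E → CovE E :=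
  fun p => fderiv ℝ η p (X p) + (η p).comp (fderiv ℝ X p)

/-- interior product `i_Y (dξ)` of the exterior derivative of a 1-form with a vector field -/
def iotaD (Y : E → E) (ξ : E → CovE E) : E → CovE E :=
  fun p => fderiv ℝ ξ p (Y p) - (fderiv ℝ ξ p).flip (Y p)

/-- exterior derivative of a function -/
def exD (f : E → ℝ) : E → CovE E := fun p => fderiv ℝ f p

/-- vector part of a section of `TM ⊕ T*M` -/
def secV (ψ : E → WE E) : E → E := fun p => (ψ p).1

/-- covector part of a section of `TM ⊕ T*M` -/
def secC (ψ : E → WE E) : E → CovE E := fun p => (ψ p).2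

/-- the Courant bracket `⟦(X,ξ),(Y,η)⟧ = ([X,Y], 𝓛_X η − i_Y dξ)` -/
def courW (ψ φ : E → WE E) : E → WE E :=
  fun p => (vfBracket (secV ψ) (secV φ) p,
    lieD (secV ψ) (secC φ) p - iotaD (secV φ) (secC ψ) p)

end Core

/-- A Dirac structure on `M`: a subbundle `D ⊆ TM ⊕ T*M` such that
(D1) the pairing `⟨·,·⟩₊` vanishes identically on `D`,
(D2) `D` has rank equal to `dim M` (and is a genuine smooth subbundle:
it locally admits smooth frames), and
(D3) the space of smooth sections of `D` is closed under the Courant bracket. -/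
structure Dirac (E : Type) [NormedAddCommGroup E] [NormedSpace ℝ E]
    [FiniteDimensional ℝ E] where
  D : E → Submodule ℝ (WE E)
  isotropic : ∀ p : E, ∀ v ∈ D p, ∀ w ∈ D p, pairPlus v w = 0
  rank_eq : ∀ p : E, Module.finrank ℝ (D p) = Module.finrank ℝ E
  locallyFree : ∀ p : E, ∃ U ∈ nhds p, ∃ s : Fin (Module.finrank ℝ E) → E → WE E,
    (∀ i, ContDiffOn ℝ (⊤ : ℕ∞) (s i) U) ∧
      ∀ q ∈ U, D q = Submodule.span ℝ (Set.range fun i => s i q)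
  closed_bracket : ∀ ψ φ : E → WE E, SmoothF ψ → SmoothF φ →
    (∀ p, ψ p ∈ D p) → (∀ p, φ p ∈ D p) → ∀ p, courW ψ φ p ∈ D p

variable {E : Type} [NormedAddCommGroup E] [NormedSpace ℝ E] [FiniteDimensional ℝ E]

/-- smooth sections of a Dirac structure -/
def Dirac.IsSec (Dr : Dirac E) (ψ : E → WE E) : Prop :=
  SmoothF ψ ∧ ∀ p, ψ p ∈ Dr.D p

/-- An admissible function on a Dirac manifold: a smooth function `f` for which
there is a vector field `X_f` with `(X_f, df)` a smooth section of `D`. -/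
def Dirac.IsAdm (Dr : Dirac E) (f : E → ℝ) (Xf : E → E) : Prop :=
  SmoothF f ∧ Dr.IsSec (fun p => (Xf p, exD f p))

section Helpers

variable {E F : Type} [NormedAddCommGroup E] [NormedSpace ℝ E]
  [NormedAddCommGroup F] [NormedSpace ℝ F]

private lemma top_add_one : ((⊤:ℕ∞):WithTop ℕ∞) + 1 ≤ ((⊤:ℕ∞):WithTop ℕ∞) :=
  le_of_eq (by rw [show ((⊤:ℕ∞):WithTop ℕ∞) = ((⊤:ℕ∞):WithTop ℕ∞) from rfl]; norm_cast)

lemma SmoothF.diff {f : E → F} (hf : SmoothF f) : Differentiable ℝ f :=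
  hf.differentiable (by simp)

lemma SmoothF.fderivSmooth {f : E → F} (hf : SmoothF f) : SmoothF (fderiv ℝ f) :=
  hf.fderiv_right top_add_one

lemma symm2 {f : E → F} (hf : SmoothF f) (p v w : E) :
    fderiv ℝ (fderiv ℝ f) p v w = fderiv ℝ (fderiv ℝ f) p w v :=
  second_derivative_symmetric (fun y => (hf.diff y).hasFDerivAt)
    ((hf.fderivSmooth.diff p).hasFDerivAt) v w

lemma SmoothF.vfAppSmooth {X : E → E} {f : E → F} (hX : SmoothF X) (hf : SmoothF f) :
    SmoothF (vfApp X f) :=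
  hf.fderivSmooth.clm_apply hX

lemma fderiv_vfApp {X : E → E} {f : E → F} (hX : SmoothF X) (hf : SmoothF f) (p : E) :
    fderiv ℝ (vfApp X f) p =
      (fderiv ℝ f p).comp (fderiv ℝ X p) + (fderiv ℝ (fderiv ℝ f) p).flip (X p) :=
  fderiv_clm_apply (hf.fderivSmooth.diff p) (hX.diff p)

end Helpers

section DiracHelpers

variable {E : Type} [NormedAddCommGroup E] [NormedSpace ℝ E] [FiniteDimensional ℝ E]

/-- vector field of an admissible pair is smooth -/
lemma Dirac.IsAdm.smoothX {Dr : Dirac E} {f : E → ℝ} {Xf : E → E}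
    (hf : Dr.IsAdm f Xf) : SmoothF Xf :=
  hf.2.1.fst

/-- the fundamental pairing identity from isotropy -/
lemma adm_pair {Dr : Dirac E} {f g : E → ℝ} {Xf Xg : E → E}
    (hf : Dr.IsAdm f Xf) (hg : Dr.IsAdm g Xg) (p : E) :
    fderiv ℝ f p (Xg p) = -(fderiv ℝ g p (Xf p)) := by
  have h := Dr.isotropic p _ (hf.2.2 p) _ (hg.2.2 p)
  simp only [pairPlus, exD] at h
  linarith

/-- the Courant bracket of two exact sections -/
lemma cour_exact {f g : E → ℝ} {Xf Xg : E → E}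
    (hf : SmoothF f) (hg : SmoothF g) (hXf : SmoothF Xf) (p : E) :
    courW (fun q => (Xf q, exD f q)) (fun q => (Xg q, exD g q)) p
      = (vfBracket Xf Xg p, exD (vfApp Xf g) p) := by
  unfold courW secV secC
  refine Prod.ext rfl ?_
  show lieD Xf (exD g) p - iotaD Xg (exD f) p = exD (vfApp Xf g) p
  have hio : iotaD Xg (exD f) p = 0 := by
    unfold iotaD exD
    ext w
    simp [symm2 hf p (Xg p) w]
  rw [hio, sub_zero]
  unfold lieD exD vfApp
  rw [show fderiv ℝ (fun q => (fderiv ℝ g q) (Xf q)) p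
      = (fderiv ℝ g p).comp (fderiv ℝ Xf p) + (fderiv ℝ (fderiv ℝ g) p).flip (Xf p) from
    fderiv_clm_apply (hg.fderivSmooth.diff p) (hXf.diff p)]
  ext w
  simp [symm2 hg p (Xf p) w]
  ring

/-- second-order commutator identity -/
lemma vfApp_vfBracket {X Y : E → E} {h : E → ℝ}
    (hX : SmoothF X) (hY : SmoothF Y) (hh : SmoothF h) (p : E) :
    vfApp (vfBracket X Y) h p = vfApp X (vfApp Y h) p - vfApp Y (vfApp X h) p := by
  unfold vfApp vfBracket
  rw [show fderiv ℝ (fun q => (fderiv ℝ h q) (Y q)) p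
      = (fderiv ℝ h p).comp (fderiv ℝ Y p) + (fderiv ℝ (fderiv ℝ h) p).flip (Y p) from
    fderiv_clm_apply (hh.fderivSmooth.diff p) (hY.diff p),
    show fderiv ℝ (fun q => (fderiv ℝ h q) (X q)) p
      = (fderiv ℝ h p).comp (fderiv ℝ X p) + (fderiv ℝ (fderiv ℝ h) p).flip (X p) from
    fderiv_clm_apply (hh.fderivSmooth.diff p) (hX.diff p)]
  simp [symm2 hh p (X p) (Y p)]

/-- the bracket of admissible functions is admissible, with witness `-[Xf,Xg]` -/
lemma adm_bracket {Dr : Dirac E} {f g : E → ℝ} {Xf Xg : E → E}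
    (hf : Dr.IsAdm f Xf) (hg : Dr.IsAdm g Xg) :
    Dr.IsAdm (vfApp Xg f) (fun p => -(vfBracket Xf Xg p)) := by
  have hXf := hf.smoothX
  have hXg := hg.smoothX
  have hskew : vfApp Xg f = fun q => -(vfApp Xf g q) :=
    funext fun q => adm_pair hf hg q
  have hbrs : SmoothF (vfBracket Xf Xg) := by
    exact ((hXg.fderivSmooth.clm_apply hXf).sub (hXf.fderivSmooth.clm_apply hXg))
  have hsm : SmoothF (vfApp Xg f) := hXg.vfAppSmooth hf.1
  refine ⟨hsm, ?_, ?_⟩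
  · exact (hbrs.neg).prodMk hsm.fderivSmooth
  · intro p
    show (-(vfBracket Xf Xg p), exD (vfApp Xg f) p) ∈ Dr.D p
    have hc := Dr.closed_bracket (fun q => (Xf q, exD f q)) (fun q => (Xg q, exD g q))
      hf.2.1 hg.2.1 hf.2.2 hg.2.2 p
    rw [cour_exact hf.1 hg.1 hXf p] at hc
    have hneg := (Dr.D p).neg_mem hc
    have heq : (-(vfBracket Xf Xg p), exD (vfApp Xg f) p)
        = -(vfBracket Xf Xg p, exD (vfApp Xf g) p) := by
      refine Prod.ext rfl ?_
      show exD (vfApp Xg f) p = -(exD (vfApp Xf g) p)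
      unfold exD
      rw [hskew, fderiv_fun_neg]
    rw [heq]
    exact hneg

end DiracHelpers

/-- The space `C^∞_adm(M,D)` of admissible functions, with the bracket
`{f,g}' := X_g f`, is a Poisson algebra: the bracket is well defined (independent of the
choice of `X_g`), bilinear, skew-symmetric, satisfies the Leibniz rule
`{fg,h}' = f{g,h}' + g{f,h}'`, is again admissible, and satisfies the Jacobi identity. -/

theorem statement6 (Dr : Dirac E) :
    -- well-definedness of the bracket
    (∀ (f g : E → ℝ) (Xf Xg Xg' : E → E), Dr.IsAdm f Xf → Dr.IsAdm g Xg →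
      Dr.IsAdm g Xg' → vfApp Xg f = vfApp Xg' f) ∧
    -- skew-symmetry
    (∀ (f g : E → ℝ) (Xf Xg : E → E), Dr.IsAdm f Xf → Dr.IsAdm g Xg →
      vfApp Xg f = -vfApp Xf g) ∧
    -- additivity in the first argument
    (∀ (f₁ f₂ g : E → ℝ) (Xf₁ Xf₂ Xg : E → E), Dr.IsAdm f₁ Xf₁ → Dr.IsAdm f₂ Xf₂ →
      Dr.IsAdm g Xg → vfApp Xg (f₁ + f₂) = vfApp Xg f₁ + vfApp Xg f₂) ∧
    -- additivity in the second argument (with the natural witness `Xg₁ + Xg₂`)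
    (∀ (f g₁ g₂ : E → ℝ) (Xf Xg₁ Xg₂ : E → E), Dr.IsAdm f Xf → Dr.IsAdm g₁ Xg₁ →
      Dr.IsAdm g₂ Xg₂ →
      Dr.IsAdm (g₁ + g₂) (Xg₁ + Xg₂) ∧ vfApp (Xg₁ + Xg₂) f = vfApp Xg₁ f + vfApp Xg₂ f) ∧
    -- Leibniz rule
    (∀ (f g h : E → ℝ) (Xf Xg Xh : E → E), Dr.IsAdm f Xf → Dr.IsAdm g Xg →
      Dr.IsAdm h Xh → vfApp Xh (f * g) = f * vfApp Xh g + g * vfApp Xh f) ∧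
    -- the bracket of admissible functions is admissible
    (∀ (f g : E → ℝ) (Xf Xg : E → E), Dr.IsAdm f Xf → Dr.IsAdm g Xg →
      Dr.IsAdm (vfApp Xg f) (fun p => -(vfBracket Xf Xg p))) ∧
    -- Jacobi identity
    (∀ (f g h : E → ℝ) (Xf Xg Xh : E → E), Dr.IsAdm f Xf → Dr.IsAdm g Xg →
      Dr.IsAdm h Xh →
      vfApp Xh (vfApp Xg f) + vfApp Xf (vfApp Xh g) + vfApp Xg (vfApp Xf h) = 0) := by
  have skew : ∀ (f g : E → ℝ) (Xf Xg : E → E), Dr.IsAdm f Xf → Dr.IsAdm g Xg →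
      vfApp Xg f = -vfApp Xf g := by
    intro f g Xf Xg hf hg
    funext p
    exact adm_pair hf hg p
  refine ⟨?_, skew, ?_, ?_, ?_, fun f g Xf Xg hf hg => adm_bracket hf hg, ?_⟩
  · -- well-definedness
    intro f g Xf Xg Xg' hf hg hg'
    funext p
    have h1 := adm_pair hf hg p
    have h2 := adm_pair hf hg' p
    show fderiv ℝ f p (Xg p) = fderiv ℝ f p (Xg' p)
    rw [h1, h2]
  · -- additivity in the first argument
    intro f₁ f₂ g Xf₁ Xf₂ Xg hf₁ hf₂ hg
    funext p
    show fderiv ℝ (f₁ + f₂) p (Xg p) = fderiv ℝ f₁ p (Xg p) + fderiv ℝ f₂ p (Xg p)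
    rw [show fderiv ℝ (f₁ + f₂) p = fderiv ℝ f₁ p + fderiv ℝ f₂ p from
      fderiv_add (hf₁.1.diff p) (hf₂.1.diff p)]
    rfl
  · -- additivity in the second argument
    intro f g₁ g₂ Xf Xg₁ Xg₂ hf hg₁ hg₂
    constructor
    · refine ⟨hg₁.1.add hg₂.1, ?_, ?_⟩
      · have : (fun p => ((Xg₁ + Xg₂) p, exD (g₁ + g₂) p))
            = fun p => ((Xg₁ p, exD g₁ p) + (Xg₂ p, exD g₂ p) : WE E) := by
          funext p
          refine Prod.ext rfl ?_
          show exD (g₁ + g₂) p = exD g₁ p + exD g₂ p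
          exact fderiv_add (hg₁.1.diff p) (hg₂.1.diff p)
        rw [this]
        exact hg₁.2.1.add hg₂.2.1
      · intro p
        show ((Xg₁ + Xg₂) p, exD (g₁ + g₂) p) ∈ Dr.D p
        have : ((Xg₁ + Xg₂) p, exD (g₁ + g₂) p)
            = ((Xg₁ p, exD g₁ p) + (Xg₂ p, exD g₂ p) : WE E) := by
          refine Prod.ext rfl ?_
          show exD (g₁ + g₂) p = exD g₁ p + exD g₂ p
          exact fderiv_add (hg₁.1.diff p) (hg₂.1.diff p)
        rw [this]
        exact (Dr.D p).add_mem (hg₁.2.2 p) (hg₂.2.2 p)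
    · funext p
      show fderiv ℝ f p ((Xg₁ + Xg₂) p) = fderiv ℝ f p (Xg₁ p) + fderiv ℝ f p (Xg₂ p)
      rw [show (Xg₁ + Xg₂) p = Xg₁ p + Xg₂ p from rfl, map_add]
  · -- Leibniz rule
    intro f g h Xf Xg Xh hf hg hh
    funext p
    show fderiv ℝ (f * g) p (Xh p) = _
    rw [show fderiv ℝ (f * g) p = f p • fderiv ℝ g p + g p • fderiv ℝ f p from
      fderiv_mul (hf.1.diff p) (hg.1.diff p)]
    simp [vfApp]
  · -- Jacobi identity
    intro f g h Xf Xg Xh hf hg hh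
    funext p
    have hXf := hf.smoothX
    have hXg := hg.smoothX
    have hXh := hh.smoothX
    -- {f,g} is admissible with Hamiltonian field -[Xf,Xg]
    have hadm := adm_bracket hf hg
    -- skew of {f,g} with h
    have h1 : fderiv ℝ (vfApp Xg f) p (Xh p)
        = fderiv ℝ h p (vfBracket Xf Xg p) := by
      have := adm_pair hadm hh p
      simpa using this
    -- commutator expansion
    have h2 := vfApp_vfBracket hXf hXg hh.1 p
    -- skew g h at the function level
    have h3 : vfApp Xg h = fun q => -(vfApp Xh g q) := by
      funext q
      exact adm_pair hh hg q
    have h4 : vfApp Xf (vfApp Xg h) p = -(vfApp Xf (vfApp Xh g) p) := by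
      show fderiv ℝ (vfApp Xg h) p (Xf p) = -(fderiv ℝ (vfApp Xh g) p (Xf p))
      rw [h3, fderiv_fun_neg]
      rfl
    have h5 : vfApp Xg (vfApp Xf h) p = vfApp Xg (vfApp Xf h) p := rfl
    show vfApp Xh (vfApp Xg f) p + vfApp Xf (vfApp Xh g) p + vfApp Xg (vfApp Xf h) p = 0
    have hA : vfApp Xh (vfApp Xg f) p = vfApp (vfBracket Xf Xg) h p := h1
    rw [hA, h2, h4]
    ring
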